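/- In a deep resistive network with bidirectional amplifiers with per-layer gains a^{(ℓ)} > 0 and cumulative gains c^{(ℓ)} = ∏_{m=1}^{ℓ} a^{(m)} (with c^{(0)} = 1), fix a hidden unit (ℓ, k), and suppose ∑_j g^{(ℓ)}_{jk} + ∑_j g^{(ℓ+1)}_{kj} > 0. Then the value of v^{(ℓ)}_k minimizing the amplified energy E(v) = (1/2)∑_{m=1}^{L} ∑_{j,k} g^{(m)}_{jk}(v^{(m-1)}_j/c^{(m-1)} - v^{(m)}_k/c^{(m)})² over v^{(ℓ)}_k ∈ ℝ with all other potentials fixed is p^{(ℓ)}_k = (∑_j g^{(ℓ)}_{jk}·a^{(ℓ)}·v^{(ℓ-1)}_j + ∑_j g^{(ℓ+1)}_{kj}·v^{(ℓ+1)}_j / a^{(ℓ+1)}) / (∑_j g^{(ℓ)}_{jk} + ∑_j g^{(ℓ+1)}_{kj}). -/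

import Mathlib

/-!
Because `c^{(ℓ)} = c^{(ℓ-1)} a^{(ℓ)}` and `c^{(ℓ+1)} = c^{(ℓ)} a^{(ℓ+1)}`, factoring `1 / c^{(ℓ)}` out of
every residual turns `E` into `(2 (c^{(ℓ)})²)⁻¹ ∑ᵢ gᵢ (x - fᵢ)²`, a weighted sum of squares over the
incoming and outgoing conductances with targets `a^{(ℓ)} v^{(ℓ-1)}_j` and `v^{(ℓ+1)}_j / a^{(ℓ+1)}`.
Such a sum equals its value at the weighted mean plus `(∑ᵢ gᵢ) (x - mean)²`, so for positive total
weight the weighted mean, which is `p`, is the unique minimizer.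
-/

open Finset

theorem Finset.sum_mul_sub_centerMass_sq {ι : Type*} [Fintype ι] (g f : ι → ℝ)
    (hg : ∑ i, g i ≠ 0) (x : ℝ) :
    ∑ i, g i * (x - f i) ^ 2 = ∑ i, g i * (univ.centerMass g f - f i) ^ 2
      + (∑ i, g i) * (x - univ.centerMass g f) ^ 2 := by
  set μ := univ.centerMass g f
  have hμ : ∑ i, g i * f i = (∑ i, g i) * μ := by
    simp only [μ, centerMass, smul_eq_mul]
    field_simp
  have expand : ∀ t, ∑ i, g i * (t - f i) ^ 2
      = (∑ i, g i) * t ^ 2 - 2 * t * ∑ i, g i * f i + ∑ i, g i * f i ^ 2 := by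
    intro t
    rw [sum_mul, mul_sum, ← sum_sub_distrib, ← sum_add_distrib]
    exact sum_congr rfl fun i _ => by ring
  rw [expand, expand, hμ]
  ring

theorem forall_le_and_unique_of_eq_add_mul_sq {F : ℝ → ℝ} {p k : ℝ} (hk : 0 < k)
    (hF : ∀ x, F x = F p + k * (x - p) ^ 2) :
    (∀ x, F p ≤ F x) ∧ ∀ x, (∀ y, F x ≤ F y) → x = p := by
  refine ⟨fun x => ?_, fun x hx => ?_⟩
  · rw [hF x]
    nlinarith [sq_nonneg (x - p)]
  · have hle : k * (x - p) ^ 2 ≤ 0 := by linarith [hF x, hx p]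
    have hsq : (x - p) ^ 2 = 0 := le_antisymm (nonpos_of_mul_nonpos_right hle hk) (sq_nonneg _)
    exact sub_eq_zero.mp (pow_eq_zero_iff two_ne_zero |>.mp hsq)

theorem drn_amplified_hidden_unit_update_general
    (n m : ℕ)
    (gin : Fin n → ℝ) (gout : Fin m → ℝ)
    (u : Fin n → ℝ) (w : Fin m → ℝ)
    (hpos : 0 < ∑ j, gin j + ∑ j, gout j)
    (aℓ anext cprev cℓ cnext : ℝ)
    (haℓ : 0 < aℓ) (hcprev : 0 < cprev)
    (hcℓ : cℓ = cprev * aℓ) (hcnext : cnext = cℓ * anext)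
    (E : ℝ → ℝ)
    (hE : ∀ x, E x = (1 / 2) * (∑ j, gin j * (u j / cprev - x / cℓ) ^ 2
        + ∑ j, gout j * (x / cℓ - w j / cnext) ^ 2))
    (p : ℝ)
    (hp : p = (∑ j, gin j * aℓ * u j + ∑ j, gout j * (w j / anext))
        / (∑ j, gin j + ∑ j, gout j)) :
    (∀ x, E p ≤ E x) ∧ ∀ x, (∀ y, E x ≤ E y) → x = p := by
  have hcℓ0 : cℓ ≠ 0 := by rw [hcℓ]; positivity
  set g : Fin n ⊕ Fin m → ℝ := Sum.elim gin gout
  set f : Fin n ⊕ Fin m → ℝ := Sum.elim (fun j => aℓ * u j) (fun j => w j / anext)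
  have hg : ∑ i, g i = ∑ j, gin j + ∑ j, gout j := Fintype.sum_sum_type g
  have hEg : ∀ x, E x = (∑ i, g i * (x - f i) ^ 2) / (2 * cℓ ^ 2) := by
    intro x
    have hin : ∀ j, (u j / cprev - x / cℓ) ^ 2 = (x - aℓ * u j) ^ 2 / cℓ ^ 2 := fun j => by
      rw [hcℓ]; field_simp; ring
    have hout : ∀ j, x / cℓ - w j / cnext = (x - w j / anext) / cℓ := fun j => by
      rw [hcnext, mul_comm, ← div_div, div_sub_div_same]
    simp only [hE, hin, hout, Fintype.sum_sum_type, g, f, Sum.elim_inl, Sum.elim_inr, div_pow,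
      mul_div_assoc', ← sum_div]
    ring
  have hpμ : p = univ.centerMass g f := by
    simp only [hp, centerMass, hg, smul_eq_mul, Fintype.sum_sum_type, g, f, Sum.elim_inl,
      Sum.elim_inr, mul_assoc]
    ring
  refine forall_le_and_unique_of_eq_add_mul_sq (k := (∑ i, g i) / (2 * cℓ ^ 2))
    (div_pos (hg ▸ hpos) (by positivity)) fun x => ?_
  rw [hEg, hEg, hpμ, sum_mul_sub_centerMass_sq g f (hg ▸ hpos.ne') x]
  ring

/-- DRN hidden-unit update with bidirectional amplifiers (Appendix D): the value of
`v^{(ℓ)}_k` minimizing the amplified energy, with all other potentials fixed, is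
`p = (∑_j g^{(ℓ)}_{jk} a^{(ℓ)} v^{(ℓ-1)}_j + ∑_j g^{(ℓ+1)}_{kj} v^{(ℓ+1)}_j / a^{(ℓ+1)})
  / (∑_j g^{(ℓ)}_{jk} + ∑_j g^{(ℓ+1)}_{kj})`,
where `c^{(ℓ-1)}, c^{(ℓ)}, c^{(ℓ+1)}` are the cumulative gains. -/
theorem drn_amplified_hidden_unit_update
    (n m : ℕ)
    (gin : Fin n → ℝ) (gout : Fin m → ℝ)
    (u : Fin n → ℝ) (w : Fin m → ℝ)
    (hgin : ∀ j, 0 ≤ gin j) (hgout : ∀ j, 0 ≤ gout j)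
    (hpos : 0 < ∑ j, gin j + ∑ j, gout j)
    (aℓ anext cprev cℓ cnext : ℝ)
    (haℓ : 0 < aℓ) (hanext : 0 < anext) (hcprev : 0 < cprev)
    (hcℓ : cℓ = cprev * aℓ) (hcnext : cnext = cℓ * anext)
    (E : ℝ → ℝ)
    (hE : ∀ x, E x = (1 / 2) * (∑ j, gin j * (u j / cprev - x / cℓ) ^ 2
        + ∑ j, gout j * (x / cℓ - w j / cnext) ^ 2))
    (p : ℝ)
    (hp : p = (∑ j, gin j * aℓ * u j + ∑ j, gout j * (w j / anext))
        / (∑ j, gin j + ∑ j, gout j)) :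
    (∀ x, E p ≤ E x) ∧ ∀ x, (∀ y, E x ≤ E y) → x = p :=
  drn_amplified_hidden_unit_update_general n m gin gout u w hpos aℓ anext cprev cℓ cnext haℓ hcprev
    hcℓ hcnext E hE p hp
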